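/- arXiv:2311.01072 — 4 statements merged into one kernel-verified Lean document; each statement's English description precedes it below -/
import Mathlib

section
/- Let (X, μ) be a probability space, a, z ∈ L²(μ) real-valued with ∫ a dμ = 1, and set z̄ := ∫ z dμ and M := ∫ a·z dμ. Let c > 0 and N ≥ 0 be real numbers such that the Poincaré-type inequality ‖z − z̄‖_{L²(μ)} ≤ c·N holds. Then ‖z‖²_{L²(μ)} ≤ |M|·(|M| + 2c‖a − 1‖_{L²(μ)}·N) + c²‖a‖²_{L²(μ)}·N². -/
open MeasureTheory

section Aux

variable {X : Type*} [MeasurableSpace X] (μ : Measure X) [IsProbabilityMeasure μ]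

private lemma inner_toLp_eq {f g : X → ℝ} (hf : MemLp f 2 μ) (hg : MemLp g 2 μ) :
    (inner ℝ (hf.toLp f) (hg.toLp g) : ℝ) = ∫ x, f x * g x ∂μ := by
  rw [MeasureTheory.L2.inner_def]
  refine integral_congr_ae ?_
  filter_upwards [hf.coeFn_toLp, hg.coeFn_toLp] with x h1 h2
  simp [h1, h2, RCLike.inner_apply]
  ring

end Aux

set_option maxHeartbeats 1000000 in
/-- Inequality (A.1) of Proposition A.1: for a probability measure `μ`,
`a, z ∈ L²(μ)` with `∫ a dμ = 1`, `z̄ := ∫ z dμ`, `M := ∫ a·z dμ`, and assuming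
the Poincaré-type inequality `‖z − z̄‖_{L²} ≤ c·N`, one has
`‖z‖²_{L²} ≤ |M|(|M| + 2c‖a − 1‖_{L²}·N) + c²‖a‖²_{L²}·N²`. -/
theorem poincare_without_mean_zero {X : Type*} [MeasurableSpace X] (μ : Measure X)
    [IsProbabilityMeasure μ] (a z : X → ℝ)
    (ha : MemLp a 2 μ) (hz : MemLp z 2 μ)
    (hamean : ∫ x, a x ∂μ = 1)
    (c N : ℝ) (hc : 0 < c) (hN : 0 ≤ N)
    (hPoincare : (eLpNorm (fun x => z x - ∫ y, z y ∂μ) 2 μ).toReal ≤ c * N) :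
    (eLpNorm z 2 μ).toReal ^ 2 ≤
      |∫ x, a x * z x ∂μ| *
        (|∫ x, a x * z x ∂μ| + 2 * c * (eLpNorm (fun x => a x - 1) 2 μ).toReal * N)
      + c ^ 2 * (eLpNorm a 2 μ).toReal ^ 2 * N ^ 2 := by
  set zb : ℝ := ∫ y, z y ∂μ with hzb
  set M : ℝ := ∫ x, a x * z x ∂μ with hM
  have hzint : Integrable z μ := hz.integrable (by norm_num)
  have haint : Integrable a μ := ha.integrable (by norm_num)
  have hz' : MemLp (fun x => z x - zb) 2 μ := hz.sub (memLp_const zb)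
  have ha' : MemLp (fun x => a x - 1) 2 μ := ha.sub (memLp_const 1)
  have hone : MemLp (fun _ : X => (1 : ℝ)) 2 μ := memLp_const 1
  set Z : Lp ℝ 2 μ := hz.toLp z
  set W : Lp ℝ 2 μ := hz'.toLp _
  set A : Lp ℝ 2 μ := ha.toLp a
  set A' : Lp ℝ 2 μ := ha'.toLp _
  set O : Lp ℝ 2 μ := hone.toLp _
  -- norms
  have hZn : ‖Z‖ = (eLpNorm z 2 μ).toReal := Lp.norm_toLp z hz
  have hWn : ‖W‖ = (eLpNorm (fun x => z x - zb) 2 μ).toReal := Lp.norm_toLp _ hz'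
  have hAn : ‖A‖ = (eLpNorm a 2 μ).toReal := Lp.norm_toLp a ha
  have hA'n : ‖A'‖ = (eLpNorm (fun x => a x - 1) 2 μ).toReal := Lp.norm_toLp _ ha'
  have hOn : ‖O‖ = 1 := by
    rw [Lp.norm_toLp]
    rw [eLpNorm_const (1 : ℝ) (by norm_num) (IsProbabilityMeasure.ne_zero μ)]
    simp
  -- integrability of the product
  have hprod : Integrable (fun x => (a x - 1) * (z x - zb)) μ := by
    have := L2.integrable_inner (𝕜 := ℝ) A' W
    refine this.congr ?_
    filter_upwards [ha'.coeFn_toLp, hz'.coeFn_toLp] with x h1 h2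
    simp [h1, h2, RCLike.inner_apply]
    rw [mul_comm]; exact congrArg₂ (· * ·) h1 h2
  -- the key integral identity: ∫ (a-1)(z-z̄) = M - z̄
  have hkey : ∫ x, (a x - 1) * (z x - zb) ∂μ = M - zb := by
    have hmul : Integrable (fun x => a x * z x) μ := by
      have : (fun x => a x * z x) =
          fun x => (a x - 1) * (z x - zb) + zb * a x + z x - zb := by
        funext x; ring
      rw [this]
      exact (((hprod.add (haint.const_mul zb)).add hzint).sub (integrable_const zb))
    have : ∫ x, (a x - 1) * (z x - zb) ∂μ
        = ∫ x, (a x * z x - zb * a x - z x + zb) ∂μ := by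
      refine integral_congr_ae (Filter.Eventually.of_forall fun x => by ring)
    rw [this]
    have e1 : Integrable (fun x => a x * z x - zb * a x) μ :=
      hmul.sub (haint.const_mul zb)
    have e2 : Integrable (fun x => a x * z x - zb * a x - z x) μ := e1.sub hzint
    rw [integral_add e2 (integrable_const zb), integral_sub e1 hzint,
      integral_sub hmul (haint.const_mul zb), integral_const_mul, hamean]
    simp [hM, hzb]
  -- inner product identities
  have hinAW : (inner ℝ A' W : ℝ) = M - zb := by
    rw [show (inner ℝ A' W : ℝ) = ∫ x, (a x - 1) * (z x - zb) ∂μ from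
      inner_toLp_eq μ ha' hz', hkey]
  have hinOW : (inner ℝ O W : ℝ) = 0 := by
    rw [show (inner ℝ O W : ℝ) = ∫ x, (1 : ℝ) * (z x - zb) ∂μ from inner_toLp_eq μ hone hz']
    simp only [one_mul]
    rw [integral_sub hzint (integrable_const zb)]
    simp [hzb]
  have hinAO : (inner ℝ A' O : ℝ) = 0 := by
    rw [show (inner ℝ A' O : ℝ) = ∫ x, (a x - 1) * (1 : ℝ) ∂μ from inner_toLp_eq μ ha' hone]
    simp only [mul_one]
    rw [integral_sub haint (integrable_const 1)]
    simp [hamean]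
  -- decompositions
  have hZdecomp : Z = zb • O + W := by
    apply Lp.ext
    filter_upwards [hz.coeFn_toLp, Lp.coeFn_add (zb • O) W, Lp.coeFn_smul zb O,
      hone.coeFn_toLp, hz'.coeFn_toLp] with x h1 h2 h3 h4 h5
    rw [h1, h2, Pi.add_apply, h3, Pi.smul_apply, h4, h5]
    simp
  have hAdecomp : A = A' + O := by
    apply Lp.ext
    filter_upwards [ha.coeFn_toLp, Lp.coeFn_add A' O, ha'.coeFn_toLp,
      hone.coeFn_toLp] with x h1 h2 h3 h4
    rw [h1, h2, Pi.add_apply, h3, h4]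
    simp
  -- Pythagoras
  have hZsq : ‖Z‖ ^ 2 = zb ^ 2 + ‖W‖ ^ 2 := by
    rw [hZdecomp, norm_add_sq_real, norm_smul, real_inner_smul_left, hinOW, hOn]
    simp [mul_pow, sq_abs]
  have hAsq : ‖A‖ ^ 2 = ‖A'‖ ^ 2 + 1 := by
    rw [hAdecomp, norm_add_sq_real, hinAO, hOn]
    ring
  -- bound on z̄
  have hzbabs : |zb| ≤ |M| + ‖A'‖ * ‖W‖ := by
    have h1 : |(inner ℝ A' W : ℝ)| ≤ ‖A'‖ * ‖W‖ := abs_real_inner_le_norm A' W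
    rw [hinAW] at h1
    calc |zb| = |M - (M - zb)| := by ring_nf
      _ ≤ |M| + |M - zb| := abs_sub _ _
      _ ≤ |M| + ‖A'‖ * ‖W‖ := by linarith
  have hWle : ‖W‖ ≤ c * N := by rw [hWn]; exact hPoincare
  have hWpos : 0 ≤ ‖W‖ := norm_nonneg W
  have hA'pos : 0 ≤ ‖A'‖ := norm_nonneg A'
  have hMpos : 0 ≤ |M| := abs_nonneg M
  -- put everything together
  rw [← hZn, ← hAn, ← hA'n]
  have hzbsq : zb ^ 2 ≤ (|M| + ‖A'‖ * ‖W‖) ^ 2 := by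
    have := sq_abs zb
    nlinarith [abs_nonneg zb]
  nlinarith [sq_nonneg (‖A'‖ * ‖W‖), mul_le_mul_of_nonneg_left hWle hA'pos,
    mul_le_mul hWle hWle hWpos (by positivity : (0:ℝ) ≤ c * N),
    mul_le_mul_of_nonneg_left (mul_le_mul_of_nonneg_left hWle hA'pos) hMpos]
end

section
/- Let (X, μ) be a probability space, p ∈ [2, ∞), and let a ∈ L²(μ) and z ∈ L²(μ) ∩ L^p(μ) be real-valued with ∫ a dμ = 1 and ∫ a·z dμ = 0. Set z̄ := ∫ z dμ and z̃ := z − z̄. Let N ≥ 0 and C_p > 0 be real numbers such that the Gagliardo–Nirenberg-type inequality ‖z̃‖_{L^p(μ)} ≤ C_p · ‖z̃‖_{L²(μ)}^{2/p} · N^{1−2/p} holds. Then ‖z‖_{L^p(μ)} ≤ √2 · C_p · ‖a‖_{L²(μ)} · ‖z‖_{L²(μ)}^{2/p} · N^{1−2/p}. -/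
open MeasureTheory
open scoped ENNReal NNReal

private lemma eLpNorm_two_toReal_aux {X : Type*} [MeasurableSpace X] {μ : Measure X} {f : X → ℝ}
    (hf : MemLp f 2 μ) :
    (eLpNorm f 2 μ).toReal = (∫ x, ‖f x‖ ^ (2:ℝ) ∂μ) ^ (2:ℝ)⁻¹ := by
  have h := hf.eLpNorm_eq_integral_rpow_norm two_ne_zero ENNReal.ofNat_ne_top
  have h2 : ((2:ℝ≥0∞)).toReal = (2:ℝ) := by simp
  rw [h2] at h
  have hnn : 0 ≤ ∫ x, ‖f x‖ ^ (2:ℝ) ∂μ :=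
    integral_nonneg fun x => Real.rpow_nonneg (norm_nonneg _) _
  rw [h, ENNReal.toReal_ofReal (Real.rpow_nonneg hnn _)]

private lemma sq_eLpNorm_two_aux {X : Type*} [MeasurableSpace X] {μ : Measure X} {f : X → ℝ}
    (hf : MemLp f 2 μ) :
    (eLpNorm f 2 μ).toReal ^ 2 = ∫ x, f x ^ 2 ∂μ := by
  have hnn : 0 ≤ ∫ x, ‖f x‖ ^ (2:ℝ) ∂μ :=
    integral_nonneg fun x => Real.rpow_nonneg (norm_nonneg _) _
  rw [eLpNorm_two_toReal_aux hf]
  rw [← Real.rpow_natCast ((∫ x, ‖f x‖ ^ (2:ℝ) ∂μ) ^ (2:ℝ)⁻¹) 2, ← Real.rpow_mul hnn]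
  norm_num

private lemma abs_integral_mul_le_aux {X : Type*} [MeasurableSpace X] {μ : Measure X} {f g : X → ℝ}
    (hf : MemLp f 2 μ) (hg : MemLp g 2 μ) (hfg : Integrable (fun x => f x * g x) μ) :
    |∫ x, f x * g x ∂μ| ≤ (eLpNorm f 2 μ).toReal * (eLpNorm g 2 μ).toReal := by
  have h2 : ENNReal.ofReal (2:ℝ) = 2 := by norm_num
  have hpq : Real.HolderConjugate 2 2 := Real.HolderConjugate.two_two
  have key := integral_mul_norm_le_Lp_mul_Lq hpq (h2 ▸ hf) (h2 ▸ hg)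
  have h1 : |∫ x, f x * g x ∂μ| ≤ ∫ x, ‖f x‖ * ‖g x‖ ∂μ := by
    calc |∫ x, f x * g x ∂μ| ≤ ∫ x, ‖f x * g x‖ ∂μ := by
          simpa [Real.norm_eq_abs] using norm_integral_le_integral_norm (fun x => f x * g x) (μ := μ)
      _ = ∫ x, ‖f x‖ * ‖g x‖ ∂μ := by
          refine integral_congr_ae (Filter.Eventually.of_forall fun x => ?_)
          simp [abs_mul]
  rw [eLpNorm_two_toReal_aux hf, eLpNorm_two_toReal_aux hg]
  calc |∫ x, f x * g x ∂μ| ≤ ∫ x, ‖f x‖ * ‖g x‖ ∂μ := h1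
    _ ≤ (∫ x, ‖f x‖ ^ (2:ℝ) ∂μ) ^ (1/(2:ℝ)) * (∫ x, ‖g x‖ ^ (2:ℝ) ∂μ) ^ (1/(2:ℝ)) := key
    _ = (∫ x, ‖f x‖ ^ (2:ℝ) ∂μ) ^ (2:ℝ)⁻¹ * (∫ x, ‖g x‖ ^ (2:ℝ) ∂μ) ^ (2:ℝ)⁻¹ := by
          rw [one_div]

/-- Inequality (eq:GN) of Proposition A.1: for a probability measure `μ`, `p ∈ [2, ∞)`,
`a ∈ L²(μ)`, `z ∈ L²(μ) ∩ L^p(μ)` with `∫ a dμ = 1` and `∫ a·z dμ = 0`, and assuming the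
Gagliardo–Nirenberg-type inequality
`‖z̃‖_{L^p} ≤ C_p ‖z̃‖_{L²}^{2/p} N^{1−2/p}` for `z̃ := z − ∫ z dμ`, one has
`‖z‖_{L^p} ≤ √2 · C_p · ‖a‖_{L²} · ‖z‖_{L²}^{2/p} · N^{1−2/p}`. -/
theorem gagliardo_nirenberg_weighted_mean_zero {X : Type*} [MeasurableSpace X]
    (μ : Measure X) [IsProbabilityMeasure μ] (p : ℝ) (hp : 2 ≤ p)
    (a z : X → ℝ)
    (ha : MemLp a 2 μ) (hz2 : MemLp z 2 μ) (hzp : MemLp z (ENNReal.ofReal p) μ)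
    (hamean : ∫ x, a x ∂μ = 1) (haz : ∫ x, a x * z x ∂μ = 0)
    (N Cp : ℝ) (hN : 0 ≤ N) (hCp : 0 < Cp)
    (hGN : (eLpNorm (fun x => z x - ∫ y, z y ∂μ) (ENNReal.ofReal p) μ).toReal ≤
      Cp * (eLpNorm (fun x => z x - ∫ y, z y ∂μ) 2 μ).toReal ^ (2 / p) * N ^ (1 - 2 / p)) :
    (eLpNorm z (ENNReal.ofReal p) μ).toReal ≤
      Real.sqrt 2 * Cp * (eLpNorm a 2 μ).toReal *
        (eLpNorm z 2 μ).toReal ^ (2 / p) * N ^ (1 - 2 / p) := by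
  have hp0 : (0:ℝ) < p := by linarith
  set q := ENNReal.ofReal p with hq_def
  have hq0 : q ≠ 0 := by
    simp [hq_def, ENNReal.ofReal_eq_zero, not_le, hp0]
  have hq_top : q ≠ ∞ := ENNReal.ofReal_ne_top
  have hq2 : (2:ℝ≥0∞) ≤ q := by
    rw [hq_def, show (2:ℝ≥0∞) = ENNReal.ofReal 2 by norm_num]
    exact ENNReal.ofReal_le_ofReal hp
  have hq1 : (1:ℝ≥0∞) ≤ q := le_trans (by norm_num) hq2
  set zb := ∫ y, z y ∂μ with hzb_def
  set zt := fun x => z x - zb with hzt_def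
  have hzt2 : MemLp zt 2 μ := hz2.sub (memLp_const zb)
  have hztp : MemLp zt q μ := hzp.sub (memLp_const zb)
  have ha1 : MemLp (fun x => a x - 1) 2 μ := ha.sub (memLp_const 1)
  have iz : Integrable z μ := hz2.integrable (by norm_num)
  have ia : Integrable a μ := ha.integrable (by norm_num)
  have iaz : Integrable (fun x => a x * z x) μ := by
    have h1 : MemLp (a • z) 1 μ := hz2.smul ha (hpqr := ⟨by
      simp only [one_div, inv_one]
      exact ENNReal.inv_two_add_inv_two⟩)
    have h2 : Integrable (a • z) μ := memLp_one_iff_integrable.mp h1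
    exact h2.congr (Filter.Eventually.of_forall fun x => by simp [smul_eq_mul])
  -- notation
  set s := (eLpNorm zt 2 μ).toReal with hs_def
  set A := (eLpNorm a 2 μ).toReal with hA_def
  set B := (eLpNorm (fun x => a x - 1) 2 μ).toReal with hB_def
  set r := (eLpNorm z 2 μ).toReal with hr_def
  have hs0 : 0 ≤ s := ENNReal.toReal_nonneg
  have hA0 : 0 ≤ A := ENNReal.toReal_nonneg
  have hB0 : 0 ≤ B := ENNReal.toReal_nonneg
  have hr0 : 0 ≤ r := ENNReal.toReal_nonneg
  -- step 1 : zb = -∫ (a-1) * zt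
  have e1 : ∫ x, (a x - 1) * zt x ∂μ = -zb := by
    have e : ∀ x, (a x - 1) * zt x = (a x * z x - zb * a x) - (z x - zb) := fun x => by
      simp only [hzt_def]; ring
    calc ∫ x, (a x - 1) * zt x ∂μ
        = ∫ x, ((a x * z x - zb * a x) - (z x - zb)) ∂μ := by
          exact integral_congr_ae (Filter.Eventually.of_forall fun x => e x)
      _ = (∫ x, (a x * z x - zb * a x) ∂μ) - ∫ x, (z x - zb) ∂μ :=
          integral_sub (iaz.sub (ia.const_mul zb)) (iz.sub (integrable_const zb))
      _ = ((∫ x, a x * z x ∂μ) - ∫ x, zb * a x ∂μ) - ((∫ x, z x ∂μ) - ∫ _x, (zb:ℝ) ∂μ) := by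
          rw [integral_sub iaz (ia.const_mul zb), integral_sub iz (integrable_const zb)]
      _ = -zb := by
          rw [haz, integral_const_mul, hamean, integral_const, ← hzb_def]
          simp
  have hzb_bound : |zb| ≤ B * s := by
    have := abs_integral_mul_le_aux ha1 hzt2 ?_
    · rw [e1] at this; simpa [abs_neg] using this
    · have : Integrable (fun x => (a x - 1) * zt x) μ := by
        have e : ∀ x, (a x - 1) * zt x = (a x * z x - zb * a x) - (z x - zb) := fun x => by
          simp only [hzt_def]; ring
        have h := (iaz.sub (ia.const_mul zb)).sub (iz.sub (integrable_const zb))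
        exact h.congr (Filter.Eventually.of_forall fun x => (e x).symm)
      exact this
  -- step 2 : B^2 + 1 = A^2 and hence 1 + B ≤ √2 * A
  have hB2 : B ^ 2 + 1 = A ^ 2 := by
    rw [hB_def, hA_def, sq_eLpNorm_two_aux ha1, sq_eLpNorm_two_aux ha]
    have e : ∀ x, (a x - 1) ^ 2 = a x ^ 2 - 2 * a x + 1 := fun x => by ring
    have i4 : Integrable (fun x => a x ^ 2 - 2 * a x) μ := by
      exact (ha.integrable_sq).sub (ia.const_mul 2)
    calc (∫ x, (a x - 1) ^ 2 ∂μ) + 1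
        = (∫ x, (a x ^ 2 - 2 * a x + 1) ∂μ) + 1 :=
          by rw [integral_congr_ae (Filter.Eventually.of_forall fun x => e x)]
      _ = ((∫ x, (a x ^ 2 - 2 * a x) ∂μ) + ∫ _x, (1:ℝ) ∂μ) + 1 := by
          rw [integral_add i4 (integrable_const 1)]
      _ = (((∫ x, a x ^ 2 ∂μ) - ∫ x, 2 * a x ∂μ) + ∫ _x, (1:ℝ) ∂μ) + 1 := by
          rw [integral_sub ha.integrable_sq (ia.const_mul 2)]
      _ = ∫ x, a x ^ 2 ∂μ := by
          rw [integral_const_mul, hamean, integral_const]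
          simp only [measure_univ, probReal_univ, ENNReal.toReal_one, smul_eq_mul, one_mul]
          ring
  have hAB : 1 + B ≤ Real.sqrt 2 * A := by
    have h1 : (1 + B) ^ 2 ≤ (Real.sqrt 2 * A) ^ 2 := by
      rw [mul_pow, Real.sq_sqrt (by norm_num : (0:ℝ) ≤ 2), ← hB2]
      nlinarith [sq_nonneg (1 - B)]
    calc 1 + B = Real.sqrt ((1 + B) ^ 2) := (Real.sqrt_sq (by linarith)).symm
      _ ≤ Real.sqrt ((Real.sqrt 2 * A) ^ 2) := Real.sqrt_le_sqrt h1
      _ = Real.sqrt 2 * A := Real.sqrt_sq (by positivity)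
  -- step 3 : s ≤ r
  have hsr : s ≤ r := by
    have hsq : s ^ 2 ≤ r ^ 2 := by
      rw [hs_def, hr_def, sq_eLpNorm_two_aux hzt2, sq_eLpNorm_two_aux hz2]
      have e : ∀ x, zt x ^ 2 = z x ^ 2 - 2 * zb * z x + zb ^ 2 := fun x => by
        simp only [hzt_def]; ring
      have i5 : Integrable (fun x => z x ^ 2 - 2 * zb * z x) μ := by
        exact (hz2.integrable_sq).sub (iz.const_mul (2 * zb))
      calc ∫ x, zt x ^ 2 ∂μ
          = ∫ x, (z x ^ 2 - 2 * zb * z x + zb ^ 2) ∂μ :=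
            integral_congr_ae (Filter.Eventually.of_forall fun x => e x)
        _ = (∫ x, (z x ^ 2 - 2 * zb * z x) ∂μ) + ∫ _x, (zb ^ 2 : ℝ) ∂μ := by
            rw [integral_add i5 (integrable_const (zb ^ 2))]
        _ = ((∫ x, z x ^ 2 ∂μ) - ∫ x, 2 * zb * z x ∂μ) + ∫ _x, (zb ^ 2 : ℝ) ∂μ := by
            rw [integral_sub hz2.integrable_sq (iz.const_mul (2 * zb))]
        _ ≤ ∫ x, z x ^ 2 ∂μ := by
            rw [integral_const_mul, ← hzb_def, integral_const]
            simp only [measure_univ, probReal_univ, ENNReal.toReal_one, smul_eq_mul, one_mul]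
            nlinarith [sq_nonneg zb]
    calc s = Real.sqrt (s ^ 2) := (Real.sqrt_sq hs0).symm
      _ ≤ Real.sqrt (r ^ 2) := Real.sqrt_le_sqrt hsq
      _ = r := Real.sqrt_sq hr0
  -- step 4 : s ≤ Cp * s^(2/p) * N^(1-2/p)
  have hsM : s ≤ Cp * s ^ (2 / p) * N ^ (1 - 2 / p) := by
    have hmono : eLpNorm zt 2 μ ≤ eLpNorm zt q μ :=
      eLpNorm_le_eLpNorm_of_exponent_le hq2 hzt2.aestronglyMeasurable
    have := ENNReal.toReal_mono hztp.eLpNorm_ne_top hmono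
    exact le_trans this hGN
  -- step 5 : triangle inequality
  have hconst_ne : eLpNorm (fun _ : X => zb) q μ ≠ ∞ := (memLp_const zb).eLpNorm_ne_top
  have hconst : (eLpNorm (fun _ : X => zb) q μ).toReal = |zb| := by
    rw [eLpNorm_const zb hq0 (IsProbabilityMeasure.ne_zero μ)]
    simp [measure_univ, Real.norm_eq_abs]
  have htri : (eLpNorm z q μ).toReal ≤ (eLpNorm zt q μ).toReal + |zb| := by
    have hzeq : z = fun x => zt x + zb := by funext x; simp [hzt_def]
    have h : eLpNorm z q μ ≤ eLpNorm zt q μ + eLpNorm (fun _ : X => zb) q μ := by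
      nth_rewrite 1 [hzeq]
      exact eLpNorm_add_le hztp.aestronglyMeasurable aestronglyMeasurable_const hq1
    have h2 := ENNReal.toReal_mono (by
      exact ENNReal.add_ne_top.mpr ⟨hztp.eLpNorm_ne_top, hconst_ne⟩) h
    rwa [ENNReal.toReal_add hztp.eLpNorm_ne_top hconst_ne, hconst] at h2
  -- conclusion
  have hM0 : 0 ≤ Cp * s ^ (2 / p) * N ^ (1 - 2 / p) :=
    mul_nonneg (mul_nonneg hCp.le (Real.rpow_nonneg hs0 _)) (Real.rpow_nonneg hN _)
  calc (eLpNorm z q μ).toReal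
      ≤ (eLpNorm zt q μ).toReal + |zb| := htri
    _ ≤ Cp * s ^ (2 / p) * N ^ (1 - 2 / p) + B * s := add_le_add hGN hzb_bound
    _ ≤ Cp * s ^ (2 / p) * N ^ (1 - 2 / p) +
        B * (Cp * s ^ (2 / p) * N ^ (1 - 2 / p)) :=
          add_le_add (le_refl _) (mul_le_mul_of_nonneg_left hsM hB0)
    _ = (1 + B) * (Cp * s ^ (2 / p) * N ^ (1 - 2 / p)) := by ring
    _ ≤ (Real.sqrt 2 * A) * (Cp * s ^ (2 / p) * N ^ (1 - 2 / p)) :=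
          mul_le_mul_of_nonneg_right hAB hM0
    _ ≤ (Real.sqrt 2 * A) * (Cp * r ^ (2 / p) * N ^ (1 - 2 / p)) := by
          have hpow : s ^ (2 / p) ≤ r ^ (2 / p) :=
            Real.rpow_le_rpow hs0 hsr (by positivity)
          have h2A : 0 ≤ Real.sqrt 2 * A := by positivity
          have hNn : 0 ≤ N ^ (1 - 2 / p) := Real.rpow_nonneg hN _
          apply mul_le_mul_of_nonneg_left _ h2A
          apply mul_le_mul_of_nonneg_right _ hNn
          exact mul_le_mul_of_nonneg_left hpow hCp.le
    _ = Real.sqrt 2 * Cp * A * r ^ (2 / p) * N ^ (1 - 2 / p) := by ring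
end

section
/- Let γ ≥ 1, ρ̄ > 0, ρ* > 0 and let ρ be a real number with 0 ≤ ρ ≤ ρ*. Then ρ̄^{γ−1} · |ρ − ρ̄| ≤ |ρ^γ − ρ̄^γ| ≤ F₁(ρ*/ρ̄) · ρ̄^{γ−1} · |ρ − ρ̄|, where F₁(s) := γ ∫₀¹ (1 + τ(s − 1))^{γ−1} dτ for s ≥ 0. -/
open intervalIntegral

/-- The function `F₁(s) := γ ∫₀¹ (1 + τ(s − 1))^(γ−1) dτ` from Lemma A.2. -/
noncomputable def F₁ (γ s : ℝ) : ℝ := γ * ∫ τ in (0:ℝ)..1, (1 + τ * (s - 1)) ^ (γ - 1)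

lemma aux_identity (γ x : ℝ) (hγ : 1 ≤ γ) (hx : 0 ≤ x) :
    x ^ γ - 1 = γ * (x - 1) * ∫ τ in (0:ℝ)..1, (1 + τ * (x - 1)) ^ (γ - 1) := by
  rcases eq_or_ne x 1 with rfl | hx1
  · simp [Real.one_rpow]
  · have hc : x - 1 ≠ 0 := sub_ne_zero.mpr hx1
    have h1 : (∫ τ in (0:ℝ)..1, (1 + τ * (x - 1)) ^ (γ - 1))
        = ∫ τ in (0:ℝ)..1, ((x - 1) * τ + 1) ^ (γ - 1) := by
      congr 1; ext τ; ring_nf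
    rw [h1, integral_comp_mul_add (fun u => u ^ (γ - 1)) hc 1]
    rw [integral_rpow (Or.inl (by linarith))]
    have hγ0 : (0:ℝ) < γ := by linarith
    rw [sub_add_cancel]
    simp only [mul_one, mul_zero, zero_add, sub_add_cancel, Real.one_rpow, smul_eq_mul]
    field_simp

lemma aux_int_nonneg (γ x : ℝ) (hγ : 1 ≤ γ) (hx : 0 ≤ x) :
    0 ≤ ∫ τ in (0:ℝ)..1, (1 + τ * (x - 1)) ^ (γ - 1) := by
  apply intervalIntegral.integral_nonneg (by norm_num)
  intro τ hτ
  apply Real.rpow_nonneg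
  nlinarith [hτ.1, hτ.2]

lemma aux_integrable (γ x : ℝ) (hγ : 1 ≤ γ) :
    IntervalIntegrable (fun τ => (1 + τ * (x - 1)) ^ (γ - 1)) MeasureTheory.volume 0 1 := by
  apply ContinuousOn.intervalIntegrable
  apply ContinuousOn.rpow_const (by fun_prop)
  intro τ _
  right; linarith

lemma aux_int_mono (γ x s : ℝ) (hγ : 1 ≤ γ) (hx : 0 ≤ x) (hxs : x ≤ s) :
    (∫ τ in (0:ℝ)..1, (1 + τ * (x - 1)) ^ (γ - 1))
      ≤ ∫ τ in (0:ℝ)..1, (1 + τ * (s - 1)) ^ (γ - 1) := by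
  apply intervalIntegral.integral_mono_on (by norm_num)
    (aux_integrable γ x hγ) (aux_integrable γ s hγ)
  intro τ hτ
  apply Real.rpow_le_rpow (by nlinarith [hτ.1, hτ.2]) (by nlinarith [hτ.1, hτ.2]) (by linarith)

lemma aux_lower (γ a b : ℝ) (hγ : 1 ≤ γ) (ha : 0 ≤ a) (hab : a ≤ b) :
    b ^ (γ - 1) * (b - a) ≤ b ^ γ - a ^ γ := by
  rcases eq_or_lt_of_le (ha.trans hab) with rfl | hb
  · have : a = 0 := le_antisymm hab ha
    simp [this]
  · have hbγ : b ^ γ = b ^ (γ - 1) * b := by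
      rw [← Real.rpow_add_one hb.ne' (γ - 1), sub_add_cancel]
    have haγ : a ^ γ ≤ b ^ (γ - 1) * a := by
      calc a ^ γ = a ^ (γ - 1) * a := by
            rcases eq_or_lt_of_le ha with rfl | ha'
            · rw [Real.zero_rpow (lt_of_lt_of_le one_pos hγ).ne', mul_zero]
            · rw [← Real.rpow_add_one ha'.ne' (γ - 1), sub_add_cancel]
        _ ≤ b ^ (γ - 1) * a := by
            apply mul_le_mul_of_nonneg_right _ ha
            exact Real.rpow_le_rpow ha hab (by linarith)
    nlinarith [haγ]

/-- First pair of inequalities of Lemma A.2: for `γ ≥ 1`, `ρ̄ > 0`, `ρ* > 0` and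
`0 ≤ ρ ≤ ρ*`, one has
`ρ̄^(γ−1) |ρ − ρ̄| ≤ |ρ^γ − ρ̄^γ| ≤ F₁(ρ*/ρ̄) ρ̄^(γ−1) |ρ − ρ̄|`. -/
theorem pressure_difference_equiv (γ ρbar ρstar ρ : ℝ) (hγ : 1 ≤ γ)
    (hρbar : 0 < ρbar) (hρstar : 0 < ρstar) (hρ0 : 0 ≤ ρ) (hρ : ρ ≤ ρstar) :
    ρbar ^ (γ - 1) * |ρ - ρbar| ≤ |ρ ^ γ - ρbar ^ γ| ∧
      |ρ ^ γ - ρbar ^ γ| ≤ F₁ γ (ρstar / ρbar) * ρbar ^ (γ - 1) * |ρ - ρbar| := by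
  constructor
  · -- lower bound
    rcases le_total ρ ρbar with h | h
    · have h1 := aux_lower γ ρ ρbar hγ hρ0 h
      have h2 : ρ ^ γ ≤ ρbar ^ γ := Real.rpow_le_rpow hρ0 h (by linarith)
      rw [abs_sub_comm, abs_of_nonneg (by linarith), abs_sub_comm, abs_of_nonneg (by linarith)]
      linarith
    · have h1 := aux_lower γ ρbar ρ hγ hρbar.le h
      have h2 : ρbar ^ γ ≤ ρ ^ γ := Real.rpow_le_rpow hρbar.le h (by linarith)
      have h3 : ρbar ^ (γ - 1) ≤ ρ ^ (γ - 1) :=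
        Real.rpow_le_rpow hρbar.le h (by linarith)
      rw [abs_of_nonneg (by linarith), abs_of_nonneg (by linarith)]
      have h4 : ρbar ^ (γ - 1) * (ρ - ρbar) ≤ ρ ^ (γ - 1) * (ρ - ρbar) :=
        mul_le_mul_of_nonneg_right h3 (by linarith)
      linarith
  · -- upper bound
    set x := ρ / ρbar with hxdef
    set s := ρstar / ρbar with hsdef
    have hx0 : 0 ≤ x := div_nonneg hρ0 hρbar.le
    have hxs : x ≤ s := by unfold x s; gcongr
    have hγ0 : (0:ℝ) < γ := by linarith
    have hρx : ρ = ρbar * x := by rw [hxdef]; field_simp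
    have hmul : ρ ^ γ = ρbar ^ γ * x ^ γ := by rw [hρx, Real.mul_rpow hρbar.le hx0]
    have hid := aux_identity γ x hγ hx0
    set Ix := ∫ τ in (0:ℝ)..1, (1 + τ * (x - 1)) ^ (γ - 1) with hIx'
    set Is := ∫ τ in (0:ℝ)..1, (1 + τ * (s - 1)) ^ (γ - 1) with hIs'
    have hIx := aux_int_nonneg γ x hγ hx0
    have hmono := aux_int_mono γ x s hγ hx0 hxs
    have e1 : |ρ ^ γ - ρbar ^ γ| = ρbar ^ γ * (γ * Ix * |x - 1|) := by
      rw [hmul]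
      have h : ρbar ^ γ * x ^ γ - ρbar ^ γ = ρbar ^ γ * (x ^ γ - 1) := by ring
      rw [h, abs_mul, abs_of_pos (Real.rpow_pos_of_pos hρbar γ), hid,
        abs_mul, abs_mul, abs_of_pos hγ0, abs_of_nonneg hIx]
      ring
    have e2 : |ρ - ρbar| = ρbar * |x - 1| := by
      rw [← abs_of_pos hρbar, ← abs_mul, abs_of_pos hρbar]
      congr 1
      rw [hρx]; ring
    have e3 : ρbar ^ γ = ρbar ^ (γ - 1) * ρbar := by
      rw [← Real.rpow_add_one hρbar.ne' (γ - 1), sub_add_cancel]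
    calc |ρ ^ γ - ρbar ^ γ| = ρbar ^ γ * (γ * Ix * |x - 1|) := e1
      _ ≤ ρbar ^ γ * (γ * Is * |x - 1|) := by
          apply mul_le_mul_of_nonneg_left _ (Real.rpow_nonneg hρbar.le γ)
          exact mul_le_mul_of_nonneg_right
            (mul_le_mul_of_nonneg_left hmono hγ0.le) (abs_nonneg _)
      _ = F₁ γ s * ρbar ^ (γ - 1) * |ρ - ρbar| := by
          unfold F₁
          rw [← hIs', e2, e3]; ring
end

section
/- Let α > 0 and ᾱ > α/4 be real numbers, let A, B ≥ 0, and let f : [0, ∞) → [0, ∞) be measurable and satisfy ∫₀^t e^{ᾱτ} f(τ) dτ ≤ A + B·e^{(ᾱ − α/2)t} for all t ≥ 0. Then there is a constant C, depending only on A, B, α, ᾱ, such that ∫₀^∞ e^{(α/4)t} f(t) dt ≤ C; one may take C = 2A + B + (A + 4B(ᾱ − α/4)/α). -/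
open MeasureTheory
open Set Filter Real
open scoped ENNReal

lemma real_int_exp (b c : ℝ) (hb : 0 < b) :
    ∫ s in Set.Ioi c, Real.exp (-(b * s)) = Real.exp (-(b * c)) / b := by
  have hderiv : ∀ x ∈ Set.Ici c,
      HasDerivAt (fun s => -Real.exp (-(b * s)) / b) (Real.exp (-(b * x))) x := by
    intro x _
    have h1 : HasDerivAt (fun s : ℝ => -(b * s)) (-b) x := by
      simpa using (hasDerivAt_id x).const_mul (-b)
    have h3 := (h1.exp.neg).div_const b
    convert h3 using 1
    · rfl
    · rfl
    · rfl
    · field_simp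
  have hint : IntegrableOn (fun s => Real.exp (-(b * s))) (Set.Ioi c) := by
    simpa [neg_mul] using exp_neg_integrableOn_Ioi c hb
  have htend : Tendsto (fun s => -Real.exp (-(b * s)) / b) atTop (nhds 0) := by
    have h0 : Tendsto (fun s : ℝ => -(b * s)) atTop atBot :=
      tendsto_neg_atTop_atBot.comp (tendsto_id.const_mul_atTop hb)
    have := (Real.tendsto_exp_atBot.comp h0).neg.div_const b
    simpa using this
  have := integral_Ioi_of_hasDerivAt_of_tendsto' hderiv hint htend
  rw [this]; ring

lemma lint_exp (b c : ℝ) (hb : 0 < b) :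
    ∫⁻ s in Set.Ioi c, ENNReal.ofReal (b * Real.exp (-(b * s))) =
      ENNReal.ofReal (Real.exp (-(b * c))) := by
  have hint : IntegrableOn (fun s => b * Real.exp (-(b * s))) (Set.Ioi c) := by
    simpa [neg_mul, IntegrableOn] using (exp_neg_integrableOn_Ioi c hb).const_mul b
  rw [← ofReal_integral_eq_lintegral_ofReal hint
      (Filter.Eventually.of_forall fun s => by positivity)]
  rw [MeasureTheory.integral_const_mul, real_int_exp b c hb]
  congr 1
  field_simp

/-- The integration-by-parts argument at the end of Step 3 of the proof of Theorem 2.2: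
if `α > 0`, `ᾱ > α/4`, `A, B ≥ 0` and the nonnegative measurable function `f` on
`[0, ∞)` satisfies `∫₀^t e^{ᾱτ} f(τ) dτ ≤ A + B e^{(ᾱ − α/2)t}` for all `t ≥ 0`, then
`∫₀^∞ e^{(α/4)t} f(t) dt ≤ C` with `C = 2A + B + (A + 4B(ᾱ − α/4)/α)`. -/
theorem weighted_time_integral_bound (α αbar A B : ℝ) (hα : 0 < α) (hαbar : α / 4 < αbar)
    (hA : 0 ≤ A) (hB : 0 ≤ B) (f : ℝ → ℝ) (hf : Measurable f)
    (hf0 : ∀ t : ℝ, 0 ≤ t → 0 ≤ f t)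
    (hbound : ∀ t : ℝ, 0 ≤ t →
      ∫⁻ τ in Set.Ioc (0 : ℝ) t, ENNReal.ofReal (Real.exp (αbar * τ) * f τ) ≤
        ENNReal.ofReal (A + B * Real.exp ((αbar - α / 2) * t))) :
    ∫⁻ t in Set.Ioi (0 : ℝ), ENNReal.ofReal (Real.exp (α / 4 * t) * f t) ≤
      ENNReal.ofReal (2 * A + B + (A + 4 * B * (αbar - α / 4) / α)) := by
  set β : ℝ := αbar - α / 4 with hβdef
  have hβ : 0 < β := by simp only [hβdef]; linarith
  set G : ℝ → ℝ≥0∞ := fun τ => ENNReal.ofReal (Real.exp (αbar * τ) * f τ) with hGdef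
  set H : ℝ → ℝ≥0∞ := fun s => ENNReal.ofReal (β * Real.exp (-(β * s))) with hHdef
  have hGmeas : Measurable G :=
    ((Real.measurable_exp.comp (measurable_const.mul measurable_id)).mul hf).ennreal_ofReal
  have hHmeas : Measurable H := by
    apply Measurable.ennreal_ofReal
    exact measurable_const.mul (Real.measurable_exp.comp
      ((measurable_const.mul measurable_id).neg))
  set F : ℝ × ℝ → ℝ≥0∞ := fun p => if p.1 < p.2 then H p.2 * G p.1 else 0 with hFdef
  have hFmeas : Measurable F := by
    apply Measurable.ite (measurableSet_lt measurable_fst measurable_snd)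
    · exact (hHmeas.comp measurable_snd).mul (hGmeas.comp measurable_fst)
    · exact measurable_const
  -- step 1: rewrite integrand
  have step1 : ∫⁻ t in Set.Ioi (0 : ℝ), ENNReal.ofReal (Real.exp (α / 4 * t) * f t) =
      ∫⁻ τ in Set.Ioi (0 : ℝ), ENNReal.ofReal (Real.exp (-(β * τ))) * G τ := by
    apply lintegral_congr
    intro τ
    have h1 : Real.exp (α / 4 * τ) * f τ =
        Real.exp (-(β * τ)) * (Real.exp (αbar * τ) * f τ) := by
      rw [← mul_assoc, ← Real.exp_add]
      congr 2
      rw [hβdef]; ring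
    rw [h1, ENNReal.ofReal_mul (Real.exp_nonneg _)]
  -- step 2: exponential as an integral
  have step2 : ∀ τ : ℝ, ENNReal.ofReal (Real.exp (-(β * τ))) =
      ∫⁻ s in Set.Ioi τ, H s := fun τ => (lint_exp β τ hβ).symm
  -- step 3: write as double integral over (Ioi 0) × (Ioi 0)
  have step3 : ∀ τ ∈ Set.Ioi (0 : ℝ),
      (∫⁻ s in Set.Ioi τ, H s) * G τ = ∫⁻ s in Set.Ioi (0 : ℝ), F (τ, s) := by
    intro τ hτ
    have : ∀ s : ℝ, F (τ, s) = (Set.Ioi τ).indicator (fun s => H s * G τ) s := by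
      intro s
      simp only [hFdef, Set.indicator, Set.mem_Ioi]
    simp_rw [this]
    rw [lintegral_indicator measurableSet_Ioi, Measure.restrict_restrict measurableSet_Ioi,
      Set.inter_eq_left.mpr (Set.Ioi_subset_Ioi (le_of_lt hτ)), lintegral_mul_const _ hHmeas]
  -- swap
  have swap : ∫⁻ τ in Set.Ioi (0 : ℝ), ∫⁻ s in Set.Ioi (0 : ℝ), F (τ, s) =
      ∫⁻ s in Set.Ioi (0 : ℝ), ∫⁻ τ in Set.Ioi (0 : ℝ), F (τ, s) := by
    exact lintegral_lintegral_swap (hFmeas.aemeasurable)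
  -- step 4: inner bound
  have step4 : ∀ s ∈ Set.Ioi (0 : ℝ),
      ∫⁻ τ in Set.Ioi (0 : ℝ), F (τ, s) ≤
        H s * ENNReal.ofReal (A + B * Real.exp ((αbar - α / 2) * s)) := by
    intro s hs
    have h1 : ∀ τ : ℝ, F (τ, s) = (Set.Iio s).indicator (fun τ => H s * G τ) τ := by
      intro τ
      simp only [hFdef, Set.indicator, Set.mem_Iio]
    simp_rw [h1]
    rw [lintegral_indicator measurableSet_Iio, Measure.restrict_restrict measurableSet_Iio,
      Set.Iio_inter_Ioi, lintegral_const_mul _ hGmeas]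
    refine mul_le_mul_right ?_ _
    calc ∫⁻ τ in Set.Ioo 0 s, G τ ≤ ∫⁻ τ in Set.Ioc 0 s, G τ :=
          lintegral_mono_set Set.Ioo_subset_Ioc_self
      _ ≤ _ := hbound s (le_of_lt hs)
  -- step 5: final computation
  have key : -(β * (0:ℝ)) = 0 := by ring
  have step5 : ∫⁻ s in Set.Ioi (0 : ℝ),
      H s * ENNReal.ofReal (A + B * Real.exp ((αbar - α / 2) * s)) ≤
        ENNReal.ofReal (A + 4 * B * β / α) := by
    have hpt : ∀ s : ℝ, H s * ENNReal.ofReal (A + B * Real.exp ((αbar - α / 2) * s)) =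
        ENNReal.ofReal ((A * β) * Real.exp (-(β * s)) +
          (B * β) * Real.exp (-(α / 4 * s))) := by
      intro s
      rw [hHdef, ← ENNReal.ofReal_mul (by positivity)]
      congr 1
      have : Real.exp (-(β * s)) * Real.exp ((αbar - α / 2) * s) =
          Real.exp (-(α / 4 * s)) := by
        rw [← Real.exp_add]; congr 1; rw [hβdef]; ring
      calc β * Real.exp (-(β * s)) * (A + B * Real.exp ((αbar - α / 2) * s))
          = A * β * Real.exp (-(β * s)) +
            B * β * (Real.exp (-(β * s)) * Real.exp ((αbar - α / 2) * s)) := by ring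
        _ = _ := by rw [this]
    simp_rw [hpt]
    have hα4 : 0 < α / 4 := by linarith
    have hi1 : IntegrableOn (fun s => (A * β) * Real.exp (-(β * s))) (Set.Ioi (0:ℝ)) := by
      simpa [neg_mul, IntegrableOn] using (exp_neg_integrableOn_Ioi 0 hβ).const_mul (A * β)
    have hi2 : IntegrableOn (fun s => (B * β) * Real.exp (-(α / 4 * s))) (Set.Ioi (0:ℝ)) := by
      simpa [neg_mul, IntegrableOn] using (exp_neg_integrableOn_Ioi 0 hα4).const_mul (B * β)
    have hii : IntegrableOn (fun s => (A * β) * Real.exp (-(β * s)) +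
        (B * β) * Real.exp (-(α / 4 * s))) (Set.Ioi (0:ℝ)) := hi1.add hi2
    rw [← ofReal_integral_eq_lintegral_ofReal hii
      (Filter.Eventually.of_forall fun s => by positivity)]
    apply ENNReal.ofReal_le_ofReal
    rw [MeasureTheory.integral_add hi1 hi2, MeasureTheory.integral_const_mul,
      MeasureTheory.integral_const_mul, real_int_exp β 0 hβ, real_int_exp (α/4) 0 hα4]
    simp only [mul_zero, neg_zero, Real.exp_zero]
    have e1 : A * β * (1 / β) = A := by field_simp
    have e2 : B * β * (1 / (α / 4)) = 4 * B * β / α := by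
      have hα0 : α ≠ 0 := ne_of_gt hα
      field_simp
    rw [e1, e2]
  -- put together
  calc ∫⁻ t in Set.Ioi (0 : ℝ), ENNReal.ofReal (Real.exp (α / 4 * t) * f t)
      = ∫⁻ τ in Set.Ioi (0 : ℝ), (∫⁻ s in Set.Ioi τ, H s) * G τ := by
        rw [step1]; exact lintegral_congr fun τ => by rw [step2]
    _ = ∫⁻ τ in Set.Ioi (0 : ℝ), ∫⁻ s in Set.Ioi (0 : ℝ), F (τ, s) :=
        setLIntegral_congr_fun measurableSet_Ioi step3
    _ = ∫⁻ s in Set.Ioi (0 : ℝ), ∫⁻ τ in Set.Ioi (0 : ℝ), F (τ, s) := swap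
    _ ≤ ∫⁻ s in Set.Ioi (0 : ℝ),
          H s * ENNReal.ofReal (A + B * Real.exp ((αbar - α / 2) * s)) :=
        setLIntegral_mono (hHmeas.mul (by fun_prop)) step4
    _ ≤ ENNReal.ofReal (A + 4 * B * β / α) := step5
    _ ≤ ENNReal.ofReal (2 * A + B + (A + 4 * B * (αbar - α / 4) / α)) := by
        apply ENNReal.ofReal_le_ofReal
        rw [hβdef]; linarith
end
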